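/- Every finite simple graph G satisfies 𝓈(G) ≤ χ_SP(G), where χ_SP(G) is the sum-paintability of G. -/
import Mathlib


/-! Definitions for the slow coloring game (sum-color cost), paintability,
connectivity and auxiliary graphs. -/

variable {V : Type*}

/-- `D` is a maximal independent subset of `M` with respect to `G`:
`D ⊆ M`, `D` is independent in `G`, and every vertex of `M \ D` has a neighbor in `D`. -/
def SimpleGraph.MaxIndepSubset (G : SimpleGraph V) (M D : Finset V) : Prop :=
  D ⊆ M ∧ (∀ u ∈ D, ∀ v ∈ D, ¬ G.Adj u v) ∧ ∀ v ∈ M, v ∉ D → ∃ u ∈ D, G.Adj u v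

/-- Fueled recursion computing the slow coloring number of the subgraph of `G`
induced on the vertex set `A`.  In each round Lister marks a nonempty `M ⊆ A`,
scoring `|M|`, and Painter deletes a maximal independent subset `D` of `M`
(such a `D` is necessarily nonempty, so the game ends within `A.card` rounds;
hence the value is correct whenever the fuel is at least `A.card`). -/
noncomputable def SimpleGraph.slowAux [DecidableEq V] (G : SimpleGraph V) :
    ℕ → Finset V → ℕ
  | 0, _ => 0
  | fuel + 1, A =>
    (A.powerset.filter fun M => M.Nonempty).sup fun M =>
      M.card + sInf {m | ∃ D : Finset V, G.MaxIndepSubset M D ∧ m = G.slowAux fuel (A \ D)}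

/-- The slow coloring number (sum-color cost) `𝓈(G)` of a finite simple graph `G`. -/
noncomputable def SimpleGraph.sumColorCost [Fintype V] [DecidableEq V]
    (G : SimpleGraph V) : ℕ :=
  G.slowAux (Fintype.card V) Finset.univ

/-- `G` is `m`-connected: it has more than `m` vertices and deleting any set of
fewer than `m` vertices leaves a connected graph. -/
def SimpleGraph.MConnected [Fintype V] [DecidableEq V] (G : SimpleGraph V) (m : ℕ) : Prop :=
  m < Fintype.card V ∧
    ∀ S : Finset V, S.card < m →
      (G.induce ((Finset.univ \ S : Finset V) : Set V)).Connected

/-- The independence number `α(G)`: the maximum size of a set of pairwise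
nonadjacent vertices. -/
noncomputable def SimpleGraph.indepNumber (G : SimpleGraph V) : ℕ :=
  sSup {n | ∃ s : Set V, (∀ u ∈ s, ∀ v ∈ s, ¬ G.Adj u v) ∧ s.ncard = n}

/-- Fueled recursion for the `f`-painting game of `G` restricted to the vertex
set `A`: the empty graph is `f`-paintable, and a nonempty graph is `f`-paintable
iff every vertex has at least one token and, for every nonempty marked set `M`,
Painter can delete some maximal independent subset `D` of `M` so that the rest
is paintable after each vertex of `M \ D` loses a token. -/
def SimpleGraph.paintAux [DecidableEq V] (G : SimpleGraph V) :
    ℕ → Finset V → (V → ℕ) → Prop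
  | 0, A, _ => A = ∅
  | fuel + 1, A, f =>
    A = ∅ ∨ ((∀ v ∈ A, 1 ≤ f v) ∧
      ∀ M ⊆ A, M.Nonempty → ∃ D : Finset V, G.MaxIndepSubset M D ∧
        G.paintAux fuel (A \ D) (fun v => if v ∈ M \ D then f v - 1 else f v))

/-- `G` is `f`-paintable. -/
def SimpleGraph.Paintable [Fintype V] [DecidableEq V] (G : SimpleGraph V) (f : V → ℕ) : Prop :=
  G.paintAux (Fintype.card V) Finset.univ f

/-- The sum-paintability `χ_SP(G)`: the least total number of tokens `∑ v, f v`
over functions `f` for which `G` is `f`-paintable. -/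
noncomputable def SimpleGraph.sumPaintability [Fintype V] [DecidableEq V]
    (G : SimpleGraph V) : ℕ :=
  sInf {s | ∃ f : V → ℕ, G.Paintable f ∧ s = ∑ v, f v}

/-- The triangular prism graph on vertices `0,…,5` (a triangle `0,1,2`, a
triangle `3,4,5`, and the matching `03, 14, 25`). -/
def prismGraph : SimpleGraph (Fin 6) :=
  SimpleGraph.fromRel fun u v =>
    ((u : ℕ), (v : ℕ)) ∈ [(0,1), (1,2), (0,2), (3,4), (4,5), (3,5), (0,3), (1,4), (2,5)]

/-- The star `K_{1,n-1}` on `n` vertices, with center `0`. -/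
def starGraph (n : ℕ) : SimpleGraph (Fin n) :=
  SimpleGraph.fromRel fun u _ => (u : ℕ) = 0

lemma exists_maxIndepSubset [DecidableEq V] (G : SimpleGraph V) (M : Finset V) :
    ∃ D : Finset V, G.MaxIndepSubset M D := by
  classical
  induction M using Finset.strongInduction with
  | _ M ih =>
    rcases M.eq_empty_or_nonempty with rfl | ⟨v, hv⟩
    · exact ⟨∅, by simp, by simp, by simp⟩
    · set M' := M.filter (fun u => u ≠ v ∧ ¬ G.Adj v u) with hM'
      have hss : M' ⊂ M := by
        refine Finset.ssubset_iff_of_subset (Finset.filter_subset _ _) |>.mpr ⟨v, hv, ?_⟩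
        simp [hM']
      obtain ⟨D', hD'⟩ := ih M' hss
      obtain ⟨h1, h2, h3⟩ := hD'
      refine ⟨insert v D', ?_, ?_, ?_⟩
      · intro u hu
        rcases Finset.mem_insert.mp hu with rfl | hu
        · exact hv
        · exact (Finset.filter_subset _ _) (h1 hu)
      · intro u hu w hw
        rcases Finset.mem_insert.mp hu with hu | hu
        · subst hu
          rcases Finset.mem_insert.mp hw with hw | hw
          · subst hw; exact G.irrefl
          · exact (Finset.mem_filter.mp (h1 hw)).2.2
        · rcases Finset.mem_insert.mp hw with hw | hw
          · intro h
            exact (Finset.mem_filter.mp (h1 hu)).2.2 (hw ▸ h).symm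
          · exact h2 u hu w hw
      · intro u hu hnu
        by_cases hadj : G.Adj v u
        · exact ⟨v, Finset.mem_insert_self _ _, hadj⟩
        · have huM' : u ∈ M' := by
            refine Finset.mem_filter.mpr ⟨hu, ?_, hadj⟩
            rintro rfl
            exact hnu (Finset.mem_insert_self _ _)
          have hunD' : u ∉ D' := fun h => hnu (Finset.mem_insert_of_mem h)
          obtain ⟨w, hw, hwadj⟩ := h3 u huM' hunD'
          exact ⟨w, Finset.mem_insert_of_mem hw, hwadj⟩

lemma maxIndepSubset_nonempty [DecidableEq V] {G : SimpleGraph V} {M D : Finset V}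
    (hM : M.Nonempty) (hD : G.MaxIndepSubset M D) : D.Nonempty := by
  obtain ⟨v, hv⟩ := hM
  by_cases h : v ∈ D
  · exact ⟨v, h⟩
  · obtain ⟨u, hu, -⟩ := hD.2.2 v hv h
    exact ⟨u, hu⟩

lemma paintAux_of_large [DecidableEq V] (G : SimpleGraph V) :
    ∀ (fuel : ℕ) (A : Finset V) (f : V → ℕ), A.card ≤ fuel →
      (∀ v ∈ A, A.card ≤ f v) → G.paintAux fuel A f := by
  intro fuel
  induction fuel with
  | zero =>
    intro A f hA _
    exact Finset.card_eq_zero.mp (Nat.le_zero.mp hA)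
  | succ fuel ih =>
    intro A f hA hf
    rcases A.eq_empty_or_nonempty with rfl | hAne
    · exact Or.inl rfl
    · refine Or.inr ⟨fun v hv => le_trans (Finset.card_pos.mpr hAne) (hf v hv), ?_⟩
      intro M hM hMne
      obtain ⟨D, hD⟩ := exists_maxIndepSubset G M
      have hDne := maxIndepSubset_nonempty hMne hD
      have hDA : D ⊆ A := hD.1.trans hM
      have hcard : (A \ D).card ≤ A.card - 1 := by
        rw [Finset.card_sdiff_of_subset hDA]
        have := Finset.card_pos.mpr hDne
        omega
      refine ⟨D, hD, ih (A \ D) _ (by omega) ?_⟩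
      intro v hv
      have hvA : v ∈ A := (Finset.sdiff_subset) hv
      have := hf v hvA
      by_cases hvM : v ∈ M \ D <;> simp [hvM] <;> omega

lemma slowAux_le_sum [DecidableEq V] (G : SimpleGraph V) :
    ∀ (fuel : ℕ) (A : Finset V) (f : V → ℕ), G.paintAux fuel A f →
      G.slowAux fuel A ≤ ∑ v ∈ A, f v := by
  intro fuel
  induction fuel with
  | zero =>
    intro A f _
    simp [SimpleGraph.slowAux]
  | succ fuel ih =>
    intro A f hp
    rcases hp with rfl | ⟨h1, h2⟩
    · simp [SimpleGraph.slowAux]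
    · rw [SimpleGraph.slowAux]
      apply Finset.sup_le
      intro M hMmem
      obtain ⟨hMA, hMne⟩ := Finset.mem_filter.mp hMmem
      replace hMA : M ⊆ A := Finset.mem_powerset.mp hMA
      obtain ⟨D, hD, hpaint⟩ := h2 M hMA hMne
      have hDM : D ⊆ M := hD.1
      have hDA : D ⊆ A := hDM.trans hMA
      set f' : V → ℕ := fun v => if v ∈ M \ D then f v - 1 else f v with hf'
      have hInf : sInf {m | ∃ D' : Finset V, G.MaxIndepSubset M D' ∧
          m = G.slowAux fuel (A \ D')} ≤ G.slowAux fuel (A \ D) :=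
        Nat.sInf_le ⟨D, hD, rfl⟩
      have hih : G.slowAux fuel (A \ D) ≤ ∑ v ∈ A \ D, f' v := ih (A \ D) f' hpaint
      -- now the arithmetic
      have hMDsub : M \ D ⊆ A \ D := Finset.sdiff_subset_sdiff hMA le_rfl
      have hkey : ∑ v ∈ A \ D, (f' v + if v ∈ M \ D then 1 else 0) ≤ ∑ v ∈ A \ D, f v := by
        apply Finset.sum_le_sum
        intro v hv
        have hvA : v ∈ A := (Finset.sdiff_subset) hv
        have hfv := h1 v hvA
        by_cases hvM : v ∈ M \ D
        · simp only [hf', if_pos hvM]; omega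
        · simp only [hf', if_neg hvM]; omega
      rw [Finset.sum_add_distrib] at hkey
      have hcount : (∑ v ∈ A \ D, if v ∈ M \ D then 1 else 0) = (M \ D).card := by
        rw [Finset.sum_ite_mem, Finset.inter_eq_right.mpr hMDsub,
          Finset.sum_const, smul_eq_mul, mul_one]
      rw [hcount] at hkey
      have hsplit : ∑ v ∈ A \ D, f v + ∑ v ∈ D, f v = ∑ v ∈ A, f v :=
        Finset.sum_sdiff hDA
      have hDcard : D.card ≤ ∑ v ∈ D, f v := by
        calc D.card = ∑ _v ∈ D, 1 := by simp
        _ ≤ ∑ v ∈ D, f v := Finset.sum_le_sum fun v hv => h1 v (hDA hv)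
      have hMcard : (M \ D).card + D.card = M.card :=
        Finset.card_sdiff_add_card_eq_card hDM
      omega

/-- Every finite simple graph satisfies `𝓈(G) ≤ χ_SP(G)`. -/
theorem sumColorCost_le_sumPaintability {V : Type*} [Fintype V] [DecidableEq V]
    (G : SimpleGraph V) :
    G.sumColorCost ≤ G.sumPaintability := by
  have hne : {s | ∃ f : V → ℕ, G.Paintable f ∧ s = ∑ v, f v}.Nonempty := by
    refine ⟨∑ _v : V, Fintype.card V, fun _ => Fintype.card V, ?_, rfl⟩
    exact paintAux_of_large G (Fintype.card V) Finset.univ _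
      (by simp) (by simp)
  apply le_csInf hne
  rintro b ⟨f, hf, rfl⟩
  exact slowAux_le_sum G (Fintype.card V) Finset.univ f hf
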